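/- arXiv:1210.6100 — 3 statements merged into one kernel-verified Lean document; each statement's English description precedes it below -/
import Mathlib

section
/- Let H be a complex Hilbert space, let D be a bounded selfadjoint operator on H, and let f : ℝ → ℂ be an even Schwartz function. Then f(D) = (1/π) ∫_0^∞ f̂(t) · cos(tD) dt, where the integral is a Bochner integral in the Banach space of bounded operators on H. -/
open MeasureTheory

/-- The Fourier transform with the normalization `f̂(t) = ∫ f(x) e^{-itx} dx`. -/
noncomputable def fourierHat (f : ℝ → ℂ) (t : ℝ) : ℂ :=
  ∫ x : ℝ, f x * Complex.exp (-(Complex.I * t * x))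

/-- Continuous functional calculus of a (selfadjoint) bounded operator `D`
applied to a function `f : ℝ → ℂ`.  Since the spectrum of a selfadjoint
operator is real, we implement it via the `ℂ`-valued continuous functional
calculus applied to `z ↦ f (Re z)`. -/
noncomputable def fc {H : Type*} [NormedAddCommGroup H] [InnerProductSpace ℂ H]
    [CompleteSpace H] (f : ℝ → ℂ) (D : H →L[ℂ] H) : H →L[ℂ] H :=
  cfc (fun z : ℂ => f z.re) D

/-!
Fourier inversion with the normalisation `f̂(t) = ∫ f(x) e^{-itx} dx` reads
`∫ f̂(t) e^{itx} dt = 2π f(x)`. For even `f` the transform `f̂` is even as well, so this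
becomes `∫_0^∞ f̂(t) cos(tx) dt = π f(x)` for every real `x`. Since `f̂` is integrable and
`|cos| ≤ 1`, the continuous functional calculus of the (normal) operator `D` commutes with the
Bochner integral in `t`, which lifts the scalar identity on the spectrum of `D` to the operator
identity.
-/

open FourierTransform Complex Set
open scoped Real

theorem integral_eq_two_smul_setIntegral_Ioi_of_even {E : Type*} [NormedAddCommGroup E]
    [NormedSpace ℝ E] {g : ℝ → E} (hg : ∀ x, g (-x) = g x) (hg_int : Integrable g) :
    ∫ x, g x = (2 : ℝ) • ∫ x in Ioi 0, g x := by
  rw [← intervalIntegral.integral_Iic_add_Ioi hg_int.integrableOn hg_int.integrableOn,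
    ← neg_zero, ← integral_comp_neg_Ioi, neg_zero, two_smul]
  simp only [hg]

theorem fourierHat_eq_fourier_comp (f : ℝ → ℂ) :
    fourierHat f = fun t => 𝓕 f (t / (2 * π)) := by
  ext t
  rw [Real.fourier_real_eq_integral_exp_smul, fourierHat]
  congr 1 with x
  rw [smul_eq_mul, mul_comm]
  congr 2
  push_cast
  field_simp

theorem fourierHat_neg {f : ℝ → ℂ} (hf : ∀ x, f (-x) = f x) (t : ℝ) :
    fourierHat f (-t) = fourierHat f t := by
  rw [fourierHat, fourierHat, ← integral_neg_eq_self]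
  congr 1 with x
  rw [hf]
  push_cast
  ring_nf

theorem integrable_fourierHat {f : ℝ → ℂ} (hf : Integrable (𝓕 f)) :
    Integrable (fourierHat f) := by
  rw [fourierHat_eq_fourier_comp]
  exact hf.comp_div (by positivity)

theorem integral_fourierHat_mul_exp {f : ℝ → ℂ} (hf_cont : Continuous f)
    (hf_int : Integrable f) (hf_fourier : Integrable (𝓕 f)) (x : ℝ) :
    ∫ t, fourierHat f t * exp (↑(t * x) * I) = 2 * π * f x := by
  have hinv := congrFun (hf_cont.fourierInv_fourier_eq hf_int hf_fourier) x
  rw [Real.fourierInv_eq'] at hinv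
  have hsub := Measure.integral_comp_div
    (fun v : ℝ => exp (↑(2 * π * inner ℝ v x) * I) • 𝓕 f v) (2 * π)
  rw [hinv, abs_of_pos (by positivity), Complex.real_smul] at hsub
  push_cast at hsub
  rw [fourierHat_eq_fourier_comp, ← hsub]
  congr 1 with t
  rw [smul_eq_mul, mul_comm]
  congr 2
  simp only [RCLike.inner_apply, conj_trivial]
  push_cast
  field_simp

theorem integrable_mul_exp_ofReal_mul_I {F : ℝ → ℂ} (hF : Integrable F) (φ : ℝ → ℝ)
    (hφ : Measurable φ) : Integrable fun t => F t * exp (φ t * I) :=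
  hF.mul_bdd (by fun_prop) (.of_forall fun t => (norm_exp_ofReal_mul_I (φ t)).le)

theorem norm_cos_ofReal_le_one (x : ℝ) : ‖cos (x : ℂ)‖ ≤ 1 := by
  rw [← ofReal_cos, norm_real, Real.norm_eq_abs]
  exact Real.abs_cos_le_one x

theorem integral_fourierHat_mul_cos {f : ℝ → ℂ} (hf_even : ∀ x, f (-x) = f x)
    (hf_cont : Continuous f) (hf_int : Integrable f) (hf_fourier : Integrable (𝓕 f)) (x : ℝ) :
    ∫ t, fourierHat f t * cos (t * x) = 2 * π * f x := by
  have hF := integrable_fourierHat hf_fourier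
  have h_reflect : ∫ t, fourierHat f t * exp (↑(-t * x) * I) =
      ∫ t, fourierHat f t * exp (↑(t * x) * I) := by
    rw [← integral_neg_eq_self]
    simp only [fourierHat_neg hf_even, neg_neg]
  have h_cos (t : ℝ) : fourierHat f t * cos (t * x) =
      (fourierHat f t * exp (↑(t * x) * I) + fourierHat f t * exp (↑(-t * x) * I)) / 2 := by
    rw [cos]
    push_cast
    ring_nf
  simp only [h_cos]
  rw [integral_div, integral_add (integrable_mul_exp_ofReal_mul_I hF _ (by fun_prop))
    (integrable_mul_exp_ofReal_mul_I hF _ (by fun_prop)), h_reflect,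
    integral_fourierHat_mul_exp hf_cont hf_int hf_fourier]
  ring

theorem setIntegral_Ioi_fourierHat_mul_cos {f : ℝ → ℂ} (hf_even : ∀ x, f (-x) = f x)
    (hf_cont : Continuous f) (hf_int : Integrable f) (hf_fourier : Integrable (𝓕 f)) (x : ℝ) :
    ∫ t in Ioi 0, fourierHat f t * cos (t * x) = π * f x := by
  have h := integral_fourierHat_mul_cos hf_even hf_cont hf_int hf_fourier x
  have h_int : Integrable fun t : ℝ => fourierHat f t * cos (t * x) :=
    (integrable_fourierHat hf_fourier).mul_bdd (by fun_prop)
      (.of_forall fun t => by simpa using norm_cos_ofReal_le_one (t * x))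
  rw [integral_eq_two_smul_setIntegral_Ioi_of_even (fun t => ?_) h_int] at h
  · rw [Complex.real_smul] at h
    push_cast at h
    linear_combination h / 2
  · rw [fourierHat_neg hf_even]
    push_cast
    rw [neg_mul, cos_neg]

/-- for a bounded selfadjoint operator `D` on a complex Hilbert
space and an even Schwartz function `f`, one has
`f(D) = (1/π) ∫_0^∞ f̂(t) cos(tD) dt` (a Bochner integral in `B(H)`). -/
theorem statement1 {H : Type*} [NormedAddCommGroup H] [InnerProductSpace ℂ H]
    [CompleteSpace H] (D : H →L[ℂ] H) (hD : IsSelfAdjoint D)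
    (f : SchwartzMap ℝ ℂ) (hf_even : ∀ x : ℝ, f (-x) = f x) :
    fc (fun x => f x) D =
      (1 / (Real.pi : ℂ)) •
        ∫ t in Set.Ioi (0 : ℝ), fourierHat (fun x => f x) t •
          fc (fun x : ℝ => Complex.cos ((t : ℂ) * x)) D := by
  set F := fourierHat (fun x => f x)
  have hF_int : Integrable F := integrable_fourierHat (𝓕 f).integrable
  have hF_cont : Continuous F := by
    simpa only [F, fourierHat_eq_fourier_comp] using (𝓕 f).continuous.comp (by fun_prop)
  have h_cfc_integral := cfc_setIntegral (measurableSet_Ioi (a := 0)) (μ := volume)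
    (fun t z => F t * cos (t * z.re)) (fun t => ‖F t‖) D (by fun_prop)
    (ae_of_all _ fun t z _ => by
      simpa [norm_mul] using mul_le_of_le_one_right (norm_nonneg (F t))
        (norm_cos_ofReal_le_one (t * z.re)))
    hF_int.norm.integrableOn.hasFiniteIntegral
  calc fc (fun x => f x) D = (1 / (π : ℂ)) • cfc (fun z : ℂ => π * f z.re) D := by
        rw [cfc_const_mul _ _ _ (by fun_prop), smul_smul, one_div,
          inv_mul_cancel₀ (ofReal_ne_zero.mpr Real.pi_ne_zero), one_smul, fc]
    _ = (1 / (π : ℂ)) • cfc (fun z : ℂ => ∫ t in Ioi 0, F t * cos (t * z.re)) D := by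
        simp only [setIntegral_Ioi_fourierHat_mul_cos hf_even f.continuous f.integrable
          (𝓕 f).integrable, F]
    _ = _ := by
        rw [h_cfc_integral]
        congr 1
        refine setIntegral_congr_fun measurableSet_Ioi fun t _ => ?_
        exact cfc_const_mul _ _ _ (by fun_prop)
end

section
/- Let H be a complex Hilbert space, let D and E be bounded selfadjoint operators on H, let P be a bounded operator on H, let r > 0 and a > 0. Suppose cos(tD) ∘ P = cos(tE) ∘ P for all t ∈ [0, 2r], and that the spectrum of E is contained in {λ ∈ ℝ : a ≤ |λ|}. Then for every Schwartz function f : ℝ → ℂ (not necessarily even) whose Fourier transform f̂ is supported in [-r, r], one has ‖f(D) ∘ P‖ ≤ 2 · ‖P‖ · sup{|f(λ)| : λ ∈ ℝ, a ≤ |λ|}. -/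
open MeasureTheory
open scoped FourierTransform Real ComplexConjugate

lemma norm_cos_ofReal_mul_ofReal_le_one (t x : ℝ) : ‖Complex.cos (t * x)‖ ≤ 1 := by
  rw [← Complex.ofReal_mul, ← Complex.ofReal_cos, Complex.norm_real, Real.norm_eq_abs]
  exact Real.abs_cos_le_one _

lemma norm_sin_ofReal_mul_ofReal_le_one (t x : ℝ) : ‖Complex.sin (t * x)‖ ≤ 1 := by
  rw [← Complex.ofReal_mul, ← Complex.ofReal_sin, Complex.norm_real, Real.norm_eq_abs]
  exact Real.abs_sin_le_one _

lemma norm_mul_sq_le_of_star_mul_self_mul_eq {A : Type*} [NonUnitalNormedRing A] [StarRing A]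
    [CStarRing A] {T P Q : A} (h : star T * T * P = Q * P) :
    ‖T * P‖ ^ 2 ≤ ‖P‖ ^ 2 * ‖Q‖ :=
  calc ‖T * P‖ ^ 2 = ‖star P * (star T * T * P)‖ := by
        rw [sq, ← CStarRing.norm_star_mul_self, star_mul, mul_assoc, ← mul_assoc (star T)]
    _ = ‖star P * (Q * P)‖ := by rw [h]
    _ ≤ ‖star P‖ * (‖Q‖ * ‖P‖) := (norm_mul_le _ _).trans (by gcongr; exact norm_mul_le _ _)
    _ = ‖P‖ ^ 2 * ‖Q‖ := by rw [norm_star]; ring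

section CosineIntegral

variable {X : Type*} [MeasurableSpace X] {μ : Measure X} {C : X → ℂ} {θ : X → ℝ}

noncomputable def cosineIntegral (μ : Measure X) (C : X → ℂ) (θ : X → ℝ) (x : ℝ) : ℂ :=
  ∫ ω, C ω * Complex.cos (θ ω * x) ∂μ

noncomputable def sineIntegral (μ : Measure X) (C : X → ℂ) (θ : X → ℝ) (x : ℝ) : ℂ :=
  ∫ ω, C ω * Complex.sin (θ ω * x) ∂μ

lemma integrable_mul_cos (hC : Integrable C μ) (hθ : Measurable θ) (x : ℝ) :
    Integrable (fun ω => C ω * Complex.cos (θ ω * x)) μ :=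
  hC.mul_bdd (by fun_prop) (.of_forall fun _ => norm_cos_ofReal_mul_ofReal_le_one _ _)

lemma integrable_mul_sin (hC : Integrable C μ) (hθ : Measurable θ) (x : ℝ) :
    Integrable (fun ω => C ω * Complex.sin (θ ω * x)) μ :=
  hC.mul_bdd (by fun_prop) (.of_forall fun _ => norm_sin_ofReal_mul_ofReal_le_one _ _)

lemma continuous_cosineIntegral (hC : Integrable C μ) (hθ : Measurable θ) :
    Continuous (cosineIntegral μ C θ) := by
  refine continuous_of_dominated (bound := fun ω => ‖C ω‖) (fun x => ?_) (fun x => ?_) hC.norm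
    (.of_forall fun ω => by fun_prop)
  · exact (integrable_mul_cos hC hθ x).aestronglyMeasurable
  · refine .of_forall fun ω => ?_
    rw [norm_mul]
    exact mul_le_of_le_one_right (norm_nonneg _) (norm_cos_ofReal_mul_ofReal_le_one _ _)

lemma integral_mul_exp_eq (hC : Integrable C μ) (hθ : Measurable θ) (x : ℝ) :
    ∫ ω, C ω * Complex.exp (θ ω * x * Complex.I) ∂μ
      = cosineIntegral μ C θ x + Complex.I * sineIntegral μ C θ x := by
  rw [cosineIntegral, sineIntegral, ← integral_const_mul,
    ← integral_add (integrable_mul_cos hC hθ x) ((integrable_mul_sin hC hθ x).const_mul _)]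
  congr 1 with ω
  rw [Complex.exp_mul_I]
  ring

lemma cosineIntegral_neg (x : ℝ) : cosineIntegral μ C θ (-x) = cosineIntegral μ C θ x := by
  simp only [cosineIntegral, Complex.ofReal_neg, mul_neg, Complex.cos_neg]

lemma sineIntegral_neg (x : ℝ) : sineIntegral μ C θ (-x) = -sineIntegral μ C θ x := by
  simp only [sineIntegral, Complex.ofReal_neg, mul_neg, Complex.sin_neg, integral_neg]

lemma integrable_conj_mul_prod [SFinite μ] (hC : Integrable C μ) :
    Integrable (fun p : X × X => conj (C p.1) * C p.2) (μ.prod μ) :=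
  (memLp_one_iff_integrable.mp (memLp_one_iff_integrable.mpr hC).star).mul_prod hC

lemma conj_sineIntegral_mul_self [SFinite μ] (hC : Integrable C μ) (hθ : Measurable θ) (x : ℝ) :
    conj (sineIntegral μ C θ x) * sineIntegral μ C θ x
      = cosineIntegral (μ.prod μ) (fun p => conj (C p.1) * C p.2 / 2) (fun p => θ p.1 - θ p.2) x
        - cosineIntegral (μ.prod μ) (fun p => conj (C p.1) * C p.2 / 2)
            (fun p => θ p.1 + θ p.2) x := by
  have hQ := (integrable_conj_mul_prod hC).div_const 2
  have hconj : conj (sineIntegral μ C θ x) = ∫ ω, conj (C ω) * Complex.sin (θ ω * x) ∂μ := by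
    rw [sineIntegral, ← integral_conj]
    congr 1 with ω
    rw [map_mul, ← Complex.ofReal_mul, ← Complex.ofReal_sin, Complex.conj_ofReal]
  rw [hconj, sineIntegral, ← integral_prod_mul, cosineIntegral, cosineIntegral,
    ← integral_sub (integrable_mul_cos hQ (by fun_prop) x) (integrable_mul_cos hQ (by fun_prop) x)]
  congr 1 with p
  push_cast
  rw [sub_mul, add_mul, Complex.cos_sub, Complex.cos_add]
  ring

end CosineIntegral

section FunctionalCalculus

variable {H : Type*} [NormedAddCommGroup H] [InnerProductSpace ℂ H] [CompleteSpace H]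

lemma fc_add {g₁ g₂ : ℝ → ℂ} (hg₁ : Continuous g₁) (hg₂ : Continuous g₂) (A : H →L[ℂ] H) :
    fc (fun x => g₁ x + g₂ x) A = fc g₁ A + fc g₂ A :=
  cfc_add A _ _ (by fun_prop) (by fun_prop)

lemma fc_sub {g₁ g₂ : ℝ → ℂ} (hg₁ : Continuous g₁) (hg₂ : Continuous g₂) (A : H →L[ℂ] H) :
    fc (fun x => g₁ x - g₂ x) A = fc g₁ A - fc g₂ A :=
  cfc_sub _ _ A (by fun_prop) (by fun_prop)

lemma star_fc_mul_fc {g : ℝ → ℂ} (hg : Continuous g) (A : H →L[ℂ] H) :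
    star (fc g A) * fc g A = fc (fun x => conj (g x) * g x) A := by
  rw [fc, ← cfc_star, ← cfc_mul _ _ A (by fun_prop) (by fun_prop)]
  rfl

lemma norm_fc_le {E : H →L[ℂ] H} (hE : IsSelfAdjoint E) {s : Set ℝ} (hspec : spectrum ℝ E ⊆ s)
    {g : ℝ → ℂ} {b : ℝ} (hb : 0 ≤ b) (hg : ∀ x ∈ s, ‖g x‖ ≤ b) : ‖fc g E‖ ≤ b :=
  norm_cfc_le hb fun _ hz => hg _ (hspec (hE.spectrumRestricts.apply_mem hz))

lemma fc_cos_comp_eq_of_abs_le {D E P : H →L[ℂ] H} {R : ℝ}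
    (hcos : ∀ t ∈ Set.Icc 0 R,
      fc (fun x : ℝ => Complex.cos (t * x)) D ∘L P = fc (fun x : ℝ => Complex.cos (t * x)) E ∘L P)
    {t : ℝ} (ht : |t| ≤ R) :
    fc (fun x : ℝ => Complex.cos (t * x)) D ∘L P = fc (fun x : ℝ => Complex.cos (t * x)) E ∘L P := by
  have heven : (fun x : ℝ => Complex.cos (t * x)) = fun x : ℝ => Complex.cos (|t| * x) := by
    rcases abs_choice t with h | h <;> simp [h, neg_mul, Complex.cos_neg]
  rw [heven]
  exact hcos |t| ⟨abs_nonneg t, ht⟩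

lemma norm_fc_comp_le_of_fc_comp_eq {D E P : H →L[ℂ] H} (hE : IsSelfAdjoint E) {s : Set ℝ}
    (hspec : spectrum ℝ E ⊆ s) {g : ℝ → ℂ} {b : ℝ} (hb : 0 ≤ b) (hg : ∀ x ∈ s, ‖g x‖ ≤ b)
    (heq : fc g D ∘L P = fc g E ∘L P) : ‖fc g D ∘L P‖ ≤ b * ‖P‖ := by
  rw [heq]
  exact (ContinuousLinearMap.opNorm_comp_le _ _).trans (by gcongr; exact norm_fc_le hE hspec hb hg)

lemma norm_fc_comp_le_of_fc_conj_mul_self_comp_eq {D E P : H →L[ℂ] H} (hE : IsSelfAdjoint E)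
    {s : Set ℝ} (hspec : spectrum ℝ E ⊆ s) {g : ℝ → ℂ} (hg : Continuous g) {b : ℝ} (hb : 0 ≤ b)
    (hgb : ∀ x ∈ s, ‖g x‖ ≤ b)
    (heq : fc (fun x => conj (g x) * g x) D ∘L P = fc (fun x => conj (g x) * g x) E ∘L P) :
    ‖fc g D ∘L P‖ ≤ ‖P‖ * b := by
  have hsq : ‖fc g D * P‖ ^ 2 ≤ ‖P‖ ^ 2 * ‖fc (fun x => conj (g x) * g x) E‖ :=
    norm_mul_sq_le_of_star_mul_self_mul_eq (by rw [star_fc_mul_fc hg]; exact heq)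
  have hE_le : ‖fc (fun x => conj (g x) * g x) E‖ ≤ b ^ 2 := by
    refine norm_fc_le hE hspec (sq_nonneg b) fun x hx => ?_
    rw [norm_mul, RCLike.norm_conj, ← sq]
    exact pow_le_pow_left₀ (norm_nonneg _) (hgb x hx) 2
  refine (pow_le_pow_iff_left₀ (norm_nonneg _) (by positivity) two_ne_zero).mp ?_
  calc ‖fc g D ∘L P‖ ^ 2 ≤ ‖P‖ ^ 2 * b ^ 2 := hsq.trans (by gcongr)
    _ = (‖P‖ * b) ^ 2 := by ring

variable {X : Type*} [MeasurableSpace X] [TopologicalSpace X] [OpensMeasurableSpace X]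
  {μ : Measure X} {C : X → ℂ} {θ : X → ℝ}

lemma fc_cosineIntegral_comp (A P : H →L[ℂ] H) [IsStarNormal A] (hC : Continuous C)
    (hCi : Integrable C μ) (hθ : Continuous θ) :
    fc (cosineIntegral μ C θ) A ∘L P
      = ∫ ω, C ω • (fc (fun x => Complex.cos (θ ω * x)) A ∘L P) ∂μ := by
  let F : X → ℂ → ℂ := fun ω z => C ω * Complex.cos (θ ω * z.re)
  have hF : ContinuousOn (Function.uncurry F) (Set.univ ×ˢ spectrum ℂ A) :=
    Continuous.continuousOn (by fun_prop)
  have hbound : ∀ᵐ ω ∂μ, ∀ z ∈ spectrum ℂ A, ‖F ω z‖ ≤ ‖C ω‖ := .of_forall fun ω z _ => by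
    rw [norm_mul]
    exact mul_le_of_le_one_right (norm_nonneg _) (norm_cos_ofReal_mul_ofReal_le_one _ _)
  have hsmul : ∀ ω, cfc (F ω) A = C ω • fc (fun x => Complex.cos (θ ω * x)) A := fun ω =>
    cfc_const_mul _ _ A
  have hint : Integrable (fun ω => cfc (F ω) A) μ :=
    integrable_cfc F _ A hF hbound hCi.norm.hasFiniteIntegral
  calc fc (cosineIntegral μ C θ) A ∘L P = (∫ ω, cfc (F ω) A ∂μ) ∘L P := by
        rw [← cfc_integral F _ A hF hbound hCi.norm.hasFiniteIntegral]; rfl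
    _ = ∫ ω, cfc (F ω) A ∘L P ∂μ :=
        ((ContinuousLinearMap.compL ℂ H H H).flip P).integral_comp_comm hint |>.symm
    _ = _ := by simp_rw [hsmul, ContinuousLinearMap.smul_comp]

lemma fc_cosineIntegral_comp_eq {D E P : H →L[ℂ] H} [IsStarNormal D] [IsStarNormal E]
    (hC : Continuous C) (hCi : Integrable C μ) (hθ : Continuous θ)
    (h : ∀ ω, C ω ≠ 0 → fc (fun x => Complex.cos (θ ω * x)) D ∘L P
      = fc (fun x => Complex.cos (θ ω * x)) E ∘L P) :
    fc (cosineIntegral μ C θ) D ∘L P = fc (cosineIntegral μ C θ) E ∘L P := by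
  rw [fc_cosineIntegral_comp D P hC hCi hθ, fc_cosineIntegral_comp E P hC hCi hθ]
  refine integral_congr_ae (.of_forall fun ω => ?_)
  by_cases hω : C ω = 0
  · simp [hω]
  · simp only [h ω hω]

end FunctionalCalculus

section EvenOdd

noncomputable def evenPart (f : ℝ → ℂ) (x : ℝ) : ℂ := (f x + f (-x)) / 2

noncomputable def oddPart (f : ℝ → ℂ) (x : ℝ) : ℂ := (f x - f (-x)) / 2

variable {f : ℝ → ℂ}

lemma evenPart_add_oddPart (f : ℝ → ℂ) (x : ℝ) : evenPart f x + oddPart f x = f x := by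
  simp only [evenPart, oddPart]
  ring

lemma Continuous.evenPart (hf : Continuous f) : Continuous (evenPart f) := by
  unfold _root_.evenPart; fun_prop

lemma Continuous.oddPart (hf : Continuous f) : Continuous (oddPart f) := by
  unfold _root_.oddPart; fun_prop

lemma norm_evenPart_le {x b : ℝ} (h : ‖f x‖ ≤ b) (h' : ‖f (-x)‖ ≤ b) : ‖evenPart f x‖ ≤ b := by
  rw [evenPart, norm_div, Complex.norm_two]
  linarith [norm_add_le (f x) (f (-x))]

lemma norm_oddPart_le {x b : ℝ} (h : ‖f x‖ ≤ b) (h' : ‖f (-x)‖ ≤ b) : ‖oddPart f x‖ ≤ b := by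
  rw [oddPart, norm_div, Complex.norm_two]
  linarith [norm_sub_le (f x) (f (-x))]

lemma fourierHat_two_pi_mul (f : ℝ → ℂ) (ξ : ℝ) : fourierHat f (2 * π * ξ) = 𝓕 f ξ := by
  rw [Real.fourier_real_eq_integral_exp_smul, fourierHat]
  congr 1 with x
  rw [smul_eq_mul, mul_comm]
  congr 2
  push_cast
  ring

lemma eq_cosineIntegral_add_I_mul_sineIntegral (hc : Continuous f) (hf : Integrable f)
    (hF : Integrable (𝓕 f)) (x : ℝ) :
    f x = cosineIntegral volume (𝓕 f) (fun ξ => 2 * π * ξ) x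
      + Complex.I * sineIntegral volume (𝓕 f) (fun ξ => 2 * π * ξ) x := by
  rw [← integral_mul_exp_eq hF (by fun_prop)]
  conv_lhs => rw [← hc.fourierInv_fourier_eq hf hF, Real.fourierInv_eq']
  congr 1 with ξ
  rw [smul_eq_mul, mul_comm, RCLike.inner_apply, conj_trivial]
  congr 2
  push_cast
  ring

lemma evenPart_eq_cosineIntegral (hc : Continuous f) (hf : Integrable f)
    (hF : Integrable (𝓕 f)) :
    evenPart f = cosineIntegral volume (𝓕 f) (fun ξ => 2 * π * ξ) := by
  ext x
  rw [evenPart, eq_cosineIntegral_add_I_mul_sineIntegral hc hf hF x,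
    eq_cosineIntegral_add_I_mul_sineIntegral hc hf hF (-x), cosineIntegral_neg, sineIntegral_neg]
  ring

lemma oddPart_eq_I_mul_sineIntegral (hc : Continuous f) (hf : Integrable f)
    (hF : Integrable (𝓕 f)) :
    oddPart f = fun x => Complex.I * sineIntegral volume (𝓕 f) (fun ξ => 2 * π * ξ) x := by
  ext x
  rw [oddPart, eq_cosineIntegral_add_I_mul_sineIntegral hc hf hF x,
    eq_cosineIntegral_add_I_mul_sineIntegral hc hf hF (-x), cosineIntegral_neg, sineIntegral_neg]
  ring

end EvenOdd

section Transfer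

variable {H : Type*} [NormedAddCommGroup H] [InnerProductSpace ℂ H] [CompleteSpace H]
  {D E P : H →L[ℂ] H} [IsStarNormal D] [IsStarNormal E] {r : ℝ} {f : ℝ → ℂ}

lemma fc_evenPart_comp_eq (hc : Continuous f) (hf : Integrable f) (hFc : Continuous (𝓕 f))
    (hF : Integrable (𝓕 f)) (hsupp : ∀ ξ, 𝓕 f ξ ≠ 0 → |2 * π * ξ| ≤ r)
    (hcos : ∀ t : ℝ, |t| ≤ 2 * r →
      fc (fun x : ℝ => Complex.cos (t * x)) D ∘L P = fc (fun x : ℝ => Complex.cos (t * x)) E ∘L P) :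
    fc (evenPart f) D ∘L P = fc (evenPart f) E ∘L P := by
  rw [evenPart_eq_cosineIntegral hc hf hF]
  refine fc_cosineIntegral_comp_eq hFc hF (by fun_prop) fun ξ hξ => hcos _ ?_
  linarith [hsupp ξ hξ, abs_nonneg (2 * π * ξ)]

lemma fc_conj_oddPart_mul_self_comp_eq (hc : Continuous f) (hf : Integrable f)
    (hFc : Continuous (𝓕 f)) (hF : Integrable (𝓕 f)) (hsupp : ∀ ξ, 𝓕 f ξ ≠ 0 → |2 * π * ξ| ≤ r)
    (hcos : ∀ t : ℝ, |t| ≤ 2 * r →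
      fc (fun x : ℝ => Complex.cos (t * x)) D ∘L P = fc (fun x : ℝ => Complex.cos (t * x)) E ∘L P) :
    fc (fun x => conj (oddPart f x) * oddPart f x) D ∘L P
      = fc (fun x => conj (oddPart f x) * oddPart f x) E ∘L P := by
  set θ : ℝ → ℝ := fun ξ => 2 * π * ξ
  set Q : ℝ × ℝ → ℂ := fun p => conj (𝓕 f p.1) * 𝓕 f p.2 / 2
  have hQ : Continuous Q := by fun_prop
  have hQi : Integrable Q (volume.prod volume) := (integrable_conj_mul_prod hF).div_const 2
  have hQsupp : ∀ p, Q p ≠ 0 → |θ p.1| ≤ r ∧ |θ p.2| ≤ r := fun p hp =>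
    ⟨hsupp _ fun h => hp (by simp [Q, h]), hsupp _ fun h => hp (by simp [Q, h])⟩
  have hsq : (fun x => conj (oddPart f x) * oddPart f x) = fun x =>
      cosineIntegral (volume.prod volume) Q (fun p => θ p.1 - θ p.2) x
        - cosineIntegral (volume.prod volume) Q (fun p => θ p.1 + θ p.2) x := by
    have hI (z : ℂ) : conj (Complex.I * z) * (Complex.I * z) = conj z * z := by
      rw [map_mul, Complex.conj_I]
      linear_combination (-(conj z * z)) * Complex.I_sq
    ext x
    rw [oddPart_eq_I_mul_sineIntegral hc hf hF, hI, conj_sineIntegral_mul_self hF (by fun_prop)]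
  have hcont := fun θ' => continuous_cosineIntegral (θ := θ') hQi
  rw [hsq, fc_sub (hcont _ (by fun_prop)) (hcont _ (by fun_prop)),
    fc_sub (hcont _ (by fun_prop)) (hcont _ (by fun_prop)),
    ContinuousLinearMap.sub_comp, ContinuousLinearMap.sub_comp]
  congr 1
  · refine fc_cosineIntegral_comp_eq hQ hQi (by fun_prop) fun p hp => hcos _ ?_
    have := hQsupp p hp
    linarith [abs_sub (θ p.1) (θ p.2)]
  · refine fc_cosineIntegral_comp_eq hQ hQi (by fun_prop) fun p hp => hcos _ ?_
    have := hQsupp p hp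
    linarith [abs_add_le (θ p.1) (θ p.2)]

end Transfer

theorem statement5_general {H : Type*} [NormedAddCommGroup H] [InnerProductSpace ℂ H]
    [CompleteSpace H] (D E P : H →L[ℂ] H)
    (hD : IsSelfAdjoint D) (hE : IsSelfAdjoint E) (r a : ℝ)
    (hcos : ∀ t ∈ Set.Icc (0 : ℝ) (2 * r),
      fc (fun x : ℝ => Complex.cos ((t : ℂ) * x)) D ∘L P =
        fc (fun x : ℝ => Complex.cos ((t : ℂ) * x)) E ∘L P)
    (hspec : spectrum ℝ E ⊆ {lam : ℝ | a ≤ |lam|})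
    (f : SchwartzMap ℝ ℂ)
    (hf_supp : Function.support (fourierHat fun x => f x) ⊆ Set.Icc (-r) r) :
    ‖fc (fun x => f x) D ∘L P‖ ≤ 2 * ‖P‖ * ⨆ lam : {x : ℝ // a ≤ |x|}, ‖f (lam : ℝ)‖ := by
  have := hD.isStarNormal
  have := hE.isStarNormal
  set S := ⨆ lam : {x : ℝ // a ≤ |x|}, ‖f (lam : ℝ)‖
  have hS : 0 ≤ S := Real.iSup_nonneg fun _ => norm_nonneg _
  have hfS (x : ℝ) (hx : a ≤ |x|) : ‖f x‖ ≤ S :=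
    le_ciSup (f := fun lam : {x : ℝ // a ≤ |x|} => ‖f (lam : ℝ)‖)
      ⟨_, Set.forall_mem_range.2 fun lam => SchwartzMap.norm_le_seminorm ℝ f lam⟩ ⟨x, hx⟩
  have hfS' (x : ℝ) (hx : a ≤ |x|) : ‖f (-x)‖ ≤ S := hfS (-x) (by rwa [abs_neg])
  have hsupp (ξ : ℝ) (hξ : 𝓕 (fun x => f x) ξ ≠ 0) : |2 * π * ξ| ≤ r :=
    abs_le.2 (hf_supp (by rwa [Function.mem_support, fourierHat_two_pi_mul]))
  have hcos' (t : ℝ) (ht : |t| ≤ 2 * r) := fc_cos_comp_eq_of_abs_le hcos ht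
  have hFc : Continuous (𝓕 (fun x => f x)) := (𝓕 f).continuous
  have hF : Integrable (𝓕 (fun x => f x)) := (𝓕 f).integrable
  have heven := norm_fc_comp_le_of_fc_comp_eq hE hspec hS
    (fun x hx => norm_evenPart_le (hfS x hx) (hfS' x hx))
    (fc_evenPart_comp_eq f.continuous f.integrable hFc hF hsupp hcos')
  have hodd := norm_fc_comp_le_of_fc_conj_mul_self_comp_eq hE hspec f.continuous.oddPart hS
    (fun x hx => norm_oddPart_le (hfS x hx) (hfS' x hx))
    (fc_conj_oddPart_mul_self_comp_eq f.continuous f.integrable hFc hF hsupp hcos')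
  calc ‖fc (fun x => f x) D ∘L P‖ = ‖fc (evenPart f) D ∘L P + fc (oddPart f) D ∘L P‖ := by
        rw [← ContinuousLinearMap.add_comp, ← fc_add f.continuous.evenPart f.continuous.oddPart]
        simp only [evenPart_add_oddPart]
    _ ≤ S * ‖P‖ + ‖P‖ * S := (norm_add_le _ _).trans (add_le_add heven hodd)
    _ = 2 * ‖P‖ * S := by ring

/-- if `cos(tD) P = cos(tE) P` for all `t ∈ [0, 2r]` and the
spectrum of `E` lies in `{λ : a ≤ |λ|}`, then for every Schwartz function (not necessarily even)
`f` with `f̂` supported in `[-r, r]`,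
`‖f(D) P‖ ≤ 2 · ‖P‖ · sup {|f(λ)| : a ≤ |λ|}`. -/
theorem statement5 {H : Type*} [NormedAddCommGroup H] [InnerProductSpace ℂ H]
    [CompleteSpace H] (D E P : H →L[ℂ] H)
    (hD : IsSelfAdjoint D) (hE : IsSelfAdjoint E) (r a : ℝ) (hr : 0 < r) (ha : 0 < a)
    (hcos : ∀ t ∈ Set.Icc (0 : ℝ) (2 * r),
      fc (fun x : ℝ => Complex.cos ((t : ℂ) * x)) D ∘L P =
        fc (fun x : ℝ => Complex.cos ((t : ℂ) * x)) E ∘L P)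
    (hspec : spectrum ℝ E ⊆ {lam : ℝ | a ≤ |lam|})
    (f : SchwartzMap ℝ ℂ)
    (hf_supp : Function.support (fourierHat fun x => f x) ⊆ Set.Icc (-r) r) :
    ‖fc (fun x => f x) D ∘L P‖ ≤ 2 * ‖P‖ * ⨆ lam : {x : ℝ // a ≤ |x|}, ‖f (lam : ℝ)‖ :=
  statement5_general D E P hD hE r a hcos hspec f hf_supp
end

section
/- For every continuous function f : ℝ → ℂ vanishing at infinity and every ε > 0, there exists a Schwartz function g : ℝ → ℂ whose Fourier transform ĝ has compact support and such that sup_{x ∈ ℝ} |f(x) - g(x)| < ε. In other words, Schwartz functions with compactly supported Fourier transform are dense in C₀(ℝ, ℂ) with respect to the supremum norm. -/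
/-!
Cut `f` off outside a large compact set (Urysohn) and smooth the result: a smooth compactly
supported function is Schwartz. For a Schwartz function `w`, multiply `𝓕 w` by a smooth bump that
equals `1` on a large ball and transform back. As `‖𝓕⁻ u‖∞ ≤ ‖u‖₁`, the uniform error is bounded
by the `L¹` mass of `𝓕 w` outside the ball, which is small since `𝓕 w` is integrable.
`fourierHat` is Mathlib's `𝓕` rescaled by `t ↦ t / (2π)`, which preserves compact support.
-/

open MeasureTheory ZeroAtInfty

open Metric Set Filter Topology FourierTransform Real SchwartzMap

theorem norm_sub_smul_self_le {E : Type*} [SeminormedAddCommGroup E] [NormedSpace ℝ E] (v : E)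
    {c : ℝ} (hc : c ∈ Icc 0 1) : ‖v - c • v‖ ≤ ‖v‖ := by
  rw [show v - c • v = (1 - c) • v by rw [sub_smul, one_smul], norm_smul,
    Real.norm_of_nonneg (sub_nonneg.2 hc.2)]
  exact mul_le_of_le_one_left (norm_nonneg v) (sub_le_self 1 hc.1)

theorem MeasureTheory.Integrable.tendsto_setIntegral_compl_closedBall {α E : Type*}
    [PseudoMetricSpace α] [MeasurableSpace α] [OpensMeasurableSpace α]
    [NormedAddCommGroup E] [NormedSpace ℝ E] {μ : Measure α} {f : α → E}
    (hf : Integrable f μ) (x₀ : α) :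
    Tendsto (fun R : ℝ => ∫ x in (closedBall x₀ R)ᶜ, f x ∂μ) atTop (𝓝 0) := by
  have hempty : ⋂ R : ℝ, (closedBall x₀ R)ᶜ = ∅ :=
    eq_empty_of_forall_notMem fun x hx => mem_iInter.1 hx (dist x x₀) (mem_closedBall.2 le_rfl)
  simpa [hempty] using tendsto_setIntegral_of_antitone (μ := μ) (f := f)
    (s := fun R : ℝ => (closedBall x₀ R)ᶜ) (fun R => measurableSet_closedBall.compl)
    (fun R R' h => compl_subset_compl.2 (closedBall_subset_closedBall h)) ⟨0, hf.integrableOn⟩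

namespace ZeroAtInftyContinuousMap

variable {F : Type*} [NormedAddCommGroup F] [NormedSpace ℝ F]

theorem exists_continuous_hasCompactSupport_norm_sub_lt {X : Type*} [TopologicalSpace X]
    [RegularSpace X] [LocallyCompactSpace X] (f : C₀(X, F)) {ε : ℝ} (hε : 0 < ε) :
    ∃ h : X → F, Continuous h ∧ HasCompactSupport h ∧ ∀ x, ‖f x - h x‖ < ε := by
  have hf_small : ∀ᶠ x in cocompact X, ‖f x‖ < ε := by
    simpa using (zero_at_infty f).norm.eventually (gt_mem_nhds (by simpa using hε))
  obtain ⟨K, hK, hfK⟩ := mem_cocompact.1 hf_small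
  obtain ⟨χ, hχK, -, hχ, hχ01⟩ :=
    exists_continuous_one_zero_of_isCompact hK isClosed_empty (disjoint_empty K)
  refine ⟨fun x => χ x • f x, by fun_prop, hχ.smul_right, fun x => ?_⟩
  by_cases hx : x ∈ K
  · simp [hχK hx, hε]
  · exact (norm_sub_smul_self_le (f x) (hχ01 x)).trans_lt (hfK hx)

theorem exists_schwartzMap_norm_sub_lt {V : Type*} [NormedAddCommGroup V] [NormedSpace ℝ V]
    [FiniteDimensional ℝ V] (f : C₀(V, F)) {ε : ℝ} (hε : 0 < ε) :
    ∃ g : 𝓢(V, F), ∀ x, ‖f x - g x‖ < ε := by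
  obtain ⟨h, hc, hs, hfh⟩ := f.exists_continuous_hasCompactSupport_norm_sub_lt (half_pos hε)
  obtain ⟨g, hg, hgh, hgs⟩ :=
    hc.exists_contDiff_approx ⊤ continuous_const fun _ => half_pos hε
  refine ⟨(hs.mono hgs).toSchwartzMap hg, fun x => ?_⟩
  calc ‖f x - g x‖ ≤ ‖f x - h x‖ + ‖h x - g x‖ := norm_sub_le_norm_sub_add_norm_sub _ _ _
    _ < ε / 2 + ε / 2 := add_lt_add (hfh x) (by rw [← dist_eq_norm, dist_comm]; exact hgh x)
    _ = ε := add_halves ε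

end ZeroAtInftyContinuousMap

namespace SchwartzMap

theorem exists_hasCompactSupport_norm_sub_le_indicator {V E : Type*}
    [NormedAddCommGroup V] [NormedSpace ℝ V] [FiniteDimensional ℝ V]
    [NormedAddCommGroup E] [NormedSpace ℝ E] (u : 𝓢(V, E)) {R : ℝ} (hR : 0 < R) :
    ∃ v : 𝓢(V, E), HasCompactSupport v ∧
      ∀ x, ‖u x - v x‖ ≤ (closedBall 0 R)ᶜ.indicator (‖u ·‖) x := by
  let γ : ContDiffBump (0 : V) := ⟨R, R + 1, hR, lt_add_one R⟩
  have hγu : HasCompactSupport fun x => γ x • u x := γ.hasCompactSupport.smul_right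
  refine ⟨hγu.toSchwartzMap (γ.contDiff.smul (u.smooth ⊤)), hγu, fun x => ?_⟩
  by_cases hx : x ∈ closedBall 0 R
  · simp [γ.one_of_mem_closedBall hx, hx]
  · rw [indicator_of_mem (mem_compl hx)]
    exact norm_sub_smul_self_le (u x) ⟨γ.nonneg, γ.le_one⟩

variable {V E : Type*} [NormedAddCommGroup V] [InnerProductSpace ℝ V] [FiniteDimensional ℝ V]
  [MeasurableSpace V] [BorelSpace V] [NormedAddCommGroup E] [NormedSpace ℂ E]

theorem norm_fourierInv_apply_le_integral_norm (u : 𝓢(V, E)) (x : V) :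
    ‖𝓕⁻ u x‖ ≤ ∫ ξ, ‖u ξ‖ := by
  rw [fourierInv_coe, fourierInv_eq_fourier_neg, ← fourier_coe, ← norm_toLp_one (μ := volume)]
  exact norm_fourier_apply_le_toLp_one u (-x)

theorem exists_hasCompactSupport_fourier_norm_sub_lt [CompleteSpace E] (w : 𝓢(V, E)) {ε : ℝ}
    (hε : 0 < ε) : ∃ g : 𝓢(V, E), HasCompactSupport (𝓕 (g : V → E)) ∧ ∀ x, ‖w x - g x‖ < ε := by
  have h_tail := ((𝓕 w).integrable (μ := volume)).norm.tendsto_setIntegral_compl_closedBall 0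
  obtain ⟨R, hR_tail, hR⟩ :=
    ((h_tail.eventually (gt_mem_nhds hε)).and (eventually_gt_atTop 0)).exists
  obtain ⟨v, hv, hwv⟩ := (𝓕 w).exists_hasCompactSupport_norm_sub_le_indicator hR
  refine ⟨𝓕⁻ v, ?_, fun x => ?_⟩
  · rwa [← fourier_coe, fourier_fourierInv_eq]
  calc ‖w x - 𝓕⁻ v x‖ = ‖𝓕⁻ (𝓕 w - v) x‖ := by
        rw [sub_eq_add_neg (𝓕 w), fourierInv_add, fourierInv_neg, fourierInv_fourier_eq,
          ← sub_eq_add_neg]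
        rfl
    _ ≤ ∫ ξ, ‖𝓕 w ξ - v ξ‖ := norm_fourierInv_apply_le_integral_norm _ x
    _ ≤ ∫ ξ, (closedBall 0 R)ᶜ.indicator (‖𝓕 w ·‖) ξ :=
        integral_mono ((𝓕 w - v).integrable.norm)
          ((𝓕 w).integrable.norm.indicator measurableSet_closedBall.compl) hwv
    _ = ∫ ξ in (closedBall 0 R)ᶜ, ‖𝓕 w ξ‖ := integral_indicator measurableSet_closedBall.compl
    _ < ε := hR_tail

end SchwartzMap

theorem ZeroAtInftyContinuousMap.exists_schwartzMap_hasCompactSupport_fourier_norm_sub_lt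
    {V E : Type*} [NormedAddCommGroup V] [InnerProductSpace ℝ V] [FiniteDimensional ℝ V]
    [MeasurableSpace V] [BorelSpace V] [NormedAddCommGroup E] [NormedSpace ℂ E] [CompleteSpace E]
    (f : C₀(V, E)) {ε : ℝ} (hε : 0 < ε) :
    ∃ g : 𝓢(V, E), HasCompactSupport (𝓕 (g : V → E)) ∧ ∀ x, ‖f x - g x‖ < ε := by
  obtain ⟨w, hfw⟩ := f.exists_schwartzMap_norm_sub_lt (half_pos hε)
  obtain ⟨g, hg, hwg⟩ := w.exists_hasCompactSupport_fourier_norm_sub_lt (half_pos hε)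
  refine ⟨g, hg, fun x => ?_⟩
  calc ‖f x - g x‖ ≤ ‖f x - w x‖ + ‖w x - g x‖ := norm_sub_le_norm_sub_add_norm_sub _ _ _
    _ < ε / 2 + ε / 2 := add_lt_add (hfw x) (hwg x)
    _ = ε := add_halves ε

theorem fourierHat_eq_fourier (f : ℝ → ℂ) (t : ℝ) : fourierHat f t = 𝓕 f ((2 * π)⁻¹ • t) := by
  rw [Real.fourier_eq', fourierHat]
  congr 1 with x
  rw [smul_eq_mul, mul_comm, smul_eq_mul, Real.inner_apply]
  push_cast
  congr 2
  field_simp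

/-- Schwartz functions with compactly supported Fourier transform
are dense in `C₀(ℝ, ℂ)` for the supremum norm. -/
theorem statement9 (f : C₀(ℝ, ℂ)) (ε : ℝ) (hε : 0 < ε) :
    ∃ g : SchwartzMap ℝ ℂ,
      HasCompactSupport (fourierHat fun x => g x) ∧
      (⨆ x : ℝ, ‖f x - g x‖) < ε := by
  obtain ⟨g, hg, hfg⟩ := f.exists_schwartzMap_hasCompactSupport_fourier_norm_sub_lt (half_pos hε)
  refine ⟨g, ?_, ?_⟩
  · rw [funext (fourierHat_eq_fourier _)]
    exact hg.comp_smul (by positivity)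
  · calc (⨆ x, ‖f x - g x‖) ≤ ε / 2 := Real.iSup_le (fun x => (hfg x).le) (half_pos hε).le
      _ < ε := half_lt_self hε
end
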